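/- Let H be a strategic game with the pure belief structure satisfying property B. Then LR̄ is order independent: if R is any relaxation of LR̄ and α is an ordinal with R^{α+1} = R^α, then R^α equals the greatest fixpoint of GR̄; in particular any two outcomes of relaxations of LR̄ coincide. -/

import Mathlib

universe u

/-- Transfinite iterations of an operator on a complete lattice:
`F^0 = ⊤`, `F^(α+1) = F (F^α)`, and `F^β = ⨅_{α<β} F^α` for limit `β`. -/
noncomputable def iterate {D : Type u} [CompleteLattice D] (F : D → D) (α : Ordinal.{0}) : D :=
  Ordinal.limitRecOn α ⊤ (fun _ ih => F ih) (fun β _ ih => ⨅ (γ : Ordinal) (h : γ < β), ih γ h)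

/-- `R` is a relaxation of `F`. -/
def Relaxation {D : Type u} [CompleteLattice D] (F R : D → D) : Prop :=
  ∀ α : Ordinal.{0},
    F (iterate R α) ≤ R (iterate R α) ∧
    (F (iterate R α) ≤ iterate R α → R (iterate R α) ≤ iterate R α) ∧
    (R (iterate R α) = iterate R α → F (iterate R α) = iterate R α)

section Games

variable {n : ℕ} {T : Fin n → Type u}

/-- `GR` operator: strategies that are a best response *in the initial game* to
some opponent belief held in `G`. -/
def GR (p : ∀ i : Fin n, (∀ j, T j) → ℝ) (G : ∀ i, Set (T i)) : ∀ i, Set (T i) :=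
  fun i => {s : T i | ∃ μ : ∀ j, T j, (∀ j, j ≠ i → μ j ∈ G j) ∧
    ∀ s' : T i, p i (Function.update μ i s') ≤ p i (Function.update μ i s)}

/-- `LR` operator: strategies that are a best response *in `G`* to
some opponent belief held in `G`. -/
def LR (p : ∀ i : Fin n, (∀ j, T j) → ℝ) (G : ∀ i, Set (T i)) : ∀ i, Set (T i) :=
  fun i => {s : T i | ∃ μ : ∀ j, T j, (∀ j, j ≠ i → μ j ∈ G j) ∧
    ∀ s' ∈ G i, p i (Function.update μ i s') ≤ p i (Function.update μ i s)}

/-- `s'` strictly dominates `s` on the restriction `G`. -/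
def Dom (p : ∀ i : Fin n, (∀ j, T j) → ℝ) (G : ∀ i, Set (T i)) (i : Fin n)
    (s' s : T i) : Prop :=
  ∀ μ : ∀ j, T j, (∀ j, j ≠ i → μ j ∈ G j) →
    p i (Function.update μ i s) < p i (Function.update μ i s')

/-- `GS` operator: strategies not strictly dominated on `G` by any strategy of the initial game. -/
def GS (p : ∀ i : Fin n, (∀ j, T j) → ℝ) (G : ∀ i, Set (T i)) : ∀ i, Set (T i) :=
  fun i => {s : T i | ¬ ∃ s' : T i, Dom p G i s' s}

/-- `LS` operator: strategies not strictly dominated on `G` by any strategy in `G`. -/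
def LS (p : ∀ i : Fin n, (∀ j, T j) → ℝ) (G : ∀ i, Set (T i)) : ∀ i, Set (T i) :=
  fun i => {s : T i | ¬ ∃ s' ∈ G i, Dom p G i s' s}

/-- Property B: to each belief in the initial game a best response (in the initial game) exists. -/
def PropB (p : ∀ i : Fin n, (∀ j, T j) → ℝ) : Prop :=
  ∀ (i : Fin n) (μ : ∀ j, T j), ∃ s : T i, ∀ s' : T i,
    p i (Function.update μ i s') ≤ p i (Function.update μ i s)

/-- Property D(α). -/
def PropD (p : ∀ i : Fin n, (∀ j, T j) → ℝ) (α : Ordinal.{0}) : Prop :=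
  ∀ R : (∀ i, Set (T i)) → (∀ i, Set (T i)), Relaxation (fun G => LS p G ⊓ G) R →
    ∀ (i : Fin n) (s : T i), (∃ s' : T i, Dom p (iterate R α) i s' s) →
      ∃ s' ∈ iterate R α i, Dom p (iterate R α) i s' s

/-- Property C(α). -/
def PropC (p : ∀ i : Fin n, (∀ j, T j) → ℝ) (α : Ordinal.{0}) : Prop :=
  ∀ R : (∀ i, Set (T i)) → (∀ i, Set (T i)), Relaxation (fun G => LS p G ⊓ G) R →
    ∀ (i : Fin n) (s : T i), (∃ s' : T i, Dom p (iterate R α) i s' s) →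
      ∃ s'' : T i, Dom p (iterate R α) i s'' s ∧ ¬ ∃ s' : T i, Dom p (iterate R α) i s' s''

end Games

/-! The iterates of a relaxation `R` of `LR̄` decrease, and an induction along them shows that
each restriction `G` with `GR̄ G = G`, as well as each best response in the full game to a belief
held in `R^α`, survives up to stage `α`. At a stationary stage `R^α` is a fixpoint of `LR̄`;
there property B provides, for every `s ∈ R^α`, a best response `t` in the full game to the
belief `s` answers, so `t ∈ R^α` and `s`, being at least as good as `t`, is itself a best
response in the full game. Hence `R^α` is a fixpoint of `GR̄` lying above all the others. -/

section Iterate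

variable {D : Type u} [CompleteLattice D]

lemma iterate_zero (R : D → D) : iterate R 0 = ⊤ :=
  Ordinal.limitRecOn_zero ..

lemma iterate_add_one (R : D → D) (α : Ordinal) : iterate R (α + 1) = R (iterate R α) :=
  Ordinal.limitRecOn_add_one ..

lemma iterate_limit (R : D → D) {β : Ordinal} (hβ : Order.IsSuccLimit β) :
    iterate R β = ⨅ (γ : Ordinal) (_ : γ < β), iterate R γ :=
  Ordinal.limitRecOn_limit _ _ _ _ hβ

lemma iterate_antitone {R : D → D} (h : ∀ β, iterate R (β + 1) ≤ iterate R β) :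
    Antitone (iterate R) := by
  intro α β hαβ
  induction β using Ordinal.limitRecOn with
  | zero => rw [nonpos_iff_eq_zero.mp hαβ]
  | add_one β ih =>
    rcases hαβ.lt_or_eq with hlt | rfl
    · exact (h β).trans (ih (Order.lt_add_one_iff.mp hlt))
    · exact le_rfl
  | limit β hβ _ =>
    rcases hαβ.lt_or_eq with hlt | rfl
    · rw [iterate_limit R hβ]
      exact iInf₂_le α hlt
    · exact le_rfl

namespace Relaxation

variable {F R : D → D}

lemma iterate_antitone (hR : Relaxation F R) (hF : ∀ x, F x ≤ x) : Antitone (iterate R) :=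
  _root_.iterate_antitone fun β => by
    rw [iterate_add_one]
    exact (hR β).2.1 (hF _)

lemma map_iterate_eq (hR : Relaxation F R) {α : Ordinal} (hα : iterate R (α + 1) = iterate R α) :
    F (iterate R α) = iterate R α :=
  (hR α).2.2 ((iterate_add_one R α).symm.trans hα)

lemma le_iterate (hR : Relaxation F R) {x : D} {α : Ordinal}
    (hx : ∀ β < α, x ≤ iterate R β → x ≤ F (iterate R β)) : ∀ β ≤ α, x ≤ iterate R β := by
  intro β
  induction β using Ordinal.limitRecOn with
  | zero => intro _; rw [iterate_zero]; exact le_top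
  | add_one β ih =>
    intro hβ
    have hβα : β < α := (Order.lt_add_one_iff.mpr le_rfl).trans_le hβ
    rw [iterate_add_one]
    exact (hx β hβα (ih hβα.le)).trans (hR β).1
  | limit β hβ ih =>
    intro hβα
    rw [iterate_limit R hβ]
    exact le_iInf₂ fun γ hγ => ih γ hγ (hγ.le.trans hβα)

end Relaxation

end Iterate

section Games

variable {n : ℕ} {T : Fin n → Type u} (p : ∀ i : Fin n, (∀ j, T j) → ℝ)

lemma GR_mono : Monotone (GR p) := by
  rintro G G' hG i s ⟨μ, hμ, hbest⟩
  exact ⟨μ, fun j hj => hG j (hμ j hj), hbest⟩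

lemma GR_le_LR (G : ∀ i, Set (T i)) : GR p G ≤ LR p G := by
  rintro i s ⟨μ, hμ, hbest⟩
  exact ⟨μ, hμ, fun s' _ => hbest s'⟩

lemma le_LR_inf_of_GR_inf_eq {G X : ∀ i, Set (T i)} (hG : GR p G ⊓ G = G) (hGX : G ≤ X) :
    G ≤ LR p X ⊓ X :=
  le_inf (calc
    G = GR p G ⊓ G := hG.symm
    _ ≤ GR p X := inf_le_left.trans (GR_mono p hGX)
    _ ≤ LR p X := GR_le_LR p X) hGX

variable {p}

lemma mem_iterate_of_isBestResponse {R : (∀ i, Set (T i)) → ∀ i, Set (T i)}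
    (hR : Relaxation (fun G => LR p G ⊓ G) R) {α : Ordinal} {i : Fin n} {μ : ∀ j, T j}
    (hμ : ∀ j, j ≠ i → μ j ∈ iterate R α j) {t : T i}
    (ht : ∀ s' : T i, p i (Function.update μ i s') ≤ p i (Function.update μ i t)) :
    t ∈ iterate R α i := by
  have hanti := hR.iterate_antitone fun _ => inf_le_right
  have hsingle : ∀ X : ∀ i, Set (T i), Function.update ⊥ i {t} ≤ X ↔ t ∈ X i := by
    intro X
    rw [update_le_iff]
    simp
  refine (hsingle _).mp (hR.le_iterate (fun β hβ htβ => ?_) α le_rfl)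
  rw [hsingle] at htβ ⊢
  exact ⟨⟨μ, fun j hj => hanti hβ.le j (hμ j hj), fun s' _ => ht s'⟩, htβ⟩

lemma GR_inf_eq_of_LR_inf_eq (hB : PropB p) {X : ∀ i, Set (T i)} (hX : LR p X ⊓ X = X)
    (hbest : ∀ i (μ : ∀ j, T j), (∀ j, j ≠ i → μ j ∈ X j) → ∀ t : T i,
      (∀ s' : T i, p i (Function.update μ i s') ≤ p i (Function.update μ i t)) → t ∈ X i) :
    GR p X ⊓ X = X := by
  refine le_antisymm inf_le_right (le_inf (fun i s hs => ?_) le_rfl)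
  obtain ⟨μ, hμ, hs_best⟩ := (hX.symm.le.trans inf_le_left) i hs
  obtain ⟨t, ht⟩ := hB i μ
  exact ⟨μ, hμ, fun s' => (ht s').trans (hs_best t (hbest i μ hμ t ht))⟩

end Games

theorem stmt_10_general {n : ℕ} {T : Fin n → Type u}
    (p : ∀ i : Fin n, (∀ j, T j) → ℝ) (hB : PropB p) :
    ∀ R, Relaxation (fun G => LR p G ⊓ G) R →
      ∀ α : Ordinal.{0}, iterate R (α + 1) = iterate R α →
        IsGreatest {G : ∀ i, Set (T i) | GR p G ⊓ G = G} (iterate R α) := by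
  intro R hR α hα
  refine ⟨GR_inf_eq_of_LR_inf_eq hB (hR.map_iterate_eq hα)
      fun i μ hμ t ht => mem_iterate_of_isBestResponse hR hμ ht, fun G hG => ?_⟩
  exact hR.le_iterate (fun β _ hGβ => le_LR_inf_of_GR_inf_eq p hG hGβ) α le_rfl

theorem stmt_10 {n : ℕ} (hn : 2 ≤ n) {T : Fin n → Type u} [∀ i, Nonempty (T i)]
    (p : ∀ i : Fin n, (∀ j, T j) → ℝ) (hB : PropB p) :
    ∀ R, Relaxation (fun G => LR p G ⊓ G) R →
      ∀ α : Ordinal.{0}, iterate R (α + 1) = iterate R α →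
        IsGreatest {G : ∀ i, Set (T i) | GR p G ⊓ G = G} (iterate R α) :=
  stmt_10_general p hB
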